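/- arXiv:1309.4876 — 7 statements merged into one kernel-verified Lean document; each statement's English description precedes it below -/
import Mathlib

section
/- Let $V$ be a real Hilbert space, $K \subseteq V$ a nonempty closed convex set, $a : V \times V \to \mathbb{R}$ a continuous symmetric bilinear form that is coercive with constant $m > 0$ (i.e. $m\|v\|^2 \le a(v,v)$ for all $v \in V$), and $g \in V'$. Then there exists a unique $u \in K$ such that $a(u, v - u) \ge \langle g, v - u \rangle$ for all $v \in K$. -/
/-!
Stampacchia's fixed-point argument. Represent `a` by the operator `A` with `⟪A u, v⟫ = a u v`
and `g` by a vector `f` (Riesz). Then `u` solves the inequality iff `u = P_K (u - ρ (A u - f))`,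
where `P_K` is the metric projection onto `K`. Since `P_K` is nonexpansive and coercivity gives
`‖w - ρ A w‖ ≤ (1 - ρ m / 2) ‖w‖` for small `ρ > 0`, this map is a contraction, and Banach's
fixed-point theorem provides `u`. Uniqueness: adding the inequalities for two solutions `u, u'`
gives `m ‖u - u'‖² ≤ a (u - u', u - u') ≤ 0`.
-/

open scoped RealInnerProductSpace
open InnerProductSpace

section Projection

variable {F : Type*} [NormedAddCommGroup F] [InnerProductSpace ℝ F]

theorem exists_mem_forall_real_inner_sub_le_zero {K : Set F} (hne : K.Nonempty)
    (hK : IsComplete K) (hconv : Convex ℝ K) (x : F) :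
    ∃ p ∈ K, ∀ w ∈ K, ⟪x - p, w - p⟫ ≤ 0 := by
  obtain ⟨p, hp, hmin⟩ := exists_norm_eq_iInf_of_complete_convex hne hK hconv x
  exact ⟨p, hp, (norm_eq_iInf_iff_real_inner_le_zero hconv hp).mp hmin⟩

theorem norm_sub_le_of_real_inner_sub_le_zero {x y p q : F}
    (hp : ⟪x - p, q - p⟫ ≤ 0) (hq : ⟪y - q, p - q⟫ ≤ 0) : ‖p - q‖ ≤ ‖x - y‖ := by
  have hsplit : ⟪x - y, p - q⟫ - ‖p - q‖ ^ 2 = -⟪x - p, q - p⟫ - ⟪y - q, p - q⟫ := by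
    rw [← real_inner_self_eq_norm_sq]
    simp only [inner_sub_left, inner_sub_right, real_inner_comm]
    ring
  have hle : ‖p - q‖ ^ 2 ≤ ‖x - y‖ * ‖p - q‖ := by
    linarith [real_inner_le_norm (x - y) (p - q)]
  nlinarith [norm_nonneg (p - q), norm_nonneg (x - y)]

end Projection

section Coercive

variable {V : Type*} [NormedAddCommGroup V] [InnerProductSpace ℝ V]

theorem norm_sub_smul_apply_le_of_coercive (A : V →L[ℝ] V) {m ρ : ℝ}
    (hcoer : ∀ v, m * ‖v‖ ^ 2 ≤ ⟪A v, v⟫) (hρ : 0 ≤ ρ) (hρA : ρ * ‖A‖ ^ 2 ≤ m)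
    (hρm : ρ * m ≤ 1) (w : V) :
    ‖w - ρ • A w‖ ≤ (1 - ρ * m / 2) * ‖w‖ := by
  have hAw : ‖A w‖ ≤ ‖A‖ * ‖w‖ := A.le_opNorm w
  have hsq : ‖w - ρ • A w‖ ^ 2 ≤ ((1 - ρ * m / 2) * ‖w‖) ^ 2 :=
    calc ‖w - ρ • A w‖ ^ 2 = ‖w‖ ^ 2 - 2 * ρ * ⟪A w, w⟫ + ρ ^ 2 * ‖A w‖ ^ 2 := by
          rw [norm_sub_sq_real, inner_smul_right, norm_smul, real_inner_comm,
            Real.norm_of_nonneg hρ]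
          ring
      _ ≤ ‖w‖ ^ 2 - 2 * ρ * (m * ‖w‖ ^ 2) + ρ ^ 2 * (‖A‖ * ‖w‖) ^ 2 := by
          gcongr
          exact hcoer w
      _ ≤ (1 - ρ * m) * ‖w‖ ^ 2 := by
          nlinarith [mul_le_mul_of_nonneg_left hρA (by positivity : 0 ≤ ρ * ‖w‖ ^ 2)]
      _ ≤ ((1 - ρ * m / 2) * ‖w‖) ^ 2 := by nlinarith [sq_nonneg (ρ * m * ‖w‖)]
  exact (pow_le_pow_iff_left₀ (norm_nonneg _)
    (mul_nonneg (by linarith) (norm_nonneg _)) two_ne_zero).mp hsq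

theorem eq_of_le_apply_sub_of_coercive (a : V →L[ℝ] V →L[ℝ] ℝ) (g : V →L[ℝ] ℝ) {m : ℝ}
    (hm : 0 < m) (hcoer : ∀ v, m * ‖v‖ ^ 2 ≤ a v v) {u u' : V}
    (h : g (u' - u) ≤ a u (u' - u)) (h' : g (u - u') ≤ a u' (u - u')) : u' = u := by
  have hsum : a (u' - u) (u' - u) = -(a u (u' - u) + a u' (u - u')) := by
    rw [← neg_sub u' u]
    simp only [map_sub, map_neg, sub_apply]
    ring
  have hg : g (u - u') = -g (u' - u) := by rw [← map_neg, neg_sub]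
  have hnorm : m * ‖u' - u‖ ^ 2 ≤ 0 := by linarith [hcoer (u' - u)]
  have hsq : ‖u' - u‖ ^ 2 = 0 := le_antisymm (by nlinarith) (sq_nonneg _)
  rwa [sq_eq_zero_iff, norm_eq_zero, sub_eq_zero] at hsq

variable [CompleteSpace V]

theorem exists_mem_forall_real_inner_le_of_coercive {K : Set V} (hne : K.Nonempty)
    (hcl : IsClosed K) (hconv : Convex ℝ K) (A : V →L[ℝ] V) {m : ℝ} (hm : 0 < m)
    (hcoer : ∀ v, m * ‖v‖ ^ 2 ≤ ⟪A v, v⟫) (f : V) :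
    ∃ u ∈ K, ∀ v ∈ K, ⟪f, v - u⟫ ≤ ⟪A u, v - u⟫ := by
  choose P hPK hP using exists_mem_forall_real_inner_sub_le_zero hne hcl.isComplete hconv
  set ρ := m / (‖A‖ ^ 2 + m ^ 2)
  have hρ : 0 < ρ := by positivity
  have hρA : ρ * ‖A‖ ^ 2 ≤ m := by
    rw [div_mul_eq_mul_div, div_le_iff₀ (by positivity)]
    nlinarith [sq_nonneg m]
  have hρm : ρ * m ≤ 1 := by
    rw [div_mul_eq_mul_div, div_le_one (by positivity)]
    nlinarith [sq_nonneg ‖A‖]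
  let T : V → V := fun v ↦ P (v - ρ • (A v - f))
  have hT : ContractingWith (1 - ρ * m / 2).toNNReal T := by
    refine ⟨?_, LipschitzWith.of_dist_le_mul fun x y ↦ ?_⟩
    · rw [Real.toNNReal_lt_one]
      nlinarith
    rw [Real.coe_toNNReal _ (by linarith), dist_eq_norm, dist_eq_norm]
    calc ‖T x - T y‖ ≤ ‖(x - ρ • (A x - f)) - (y - ρ • (A y - f))‖ :=
          norm_sub_le_of_real_inner_sub_le_zero (hP _ _ (hPK _)) (hP _ _ (hPK _))
      _ = ‖(x - y) - ρ • A (x - y)‖ := by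
          rw [map_sub, smul_sub, smul_sub, smul_sub]
          congr 1
          abel
      _ ≤ (1 - ρ * m / 2) * ‖x - y‖ :=
          norm_sub_smul_apply_le_of_coercive A hcoer hρ.le hρA hρm _
  set u := hT.fixedPoint T
  have hu : P (u - ρ • (A u - f)) = u := hT.fixedPoint_isFixedPt
  refine ⟨u, hu ▸ hPK _, fun v hv ↦ ?_⟩
  have hvar := hP (u - ρ • (A u - f)) v hv
  rw [hu, sub_sub_cancel_left, inner_neg_left, real_inner_smul_left, inner_sub_left] at hvar
  nlinarith

end Coercive

theorem stmt_0_general {V : Type*} [NormedAddCommGroup V] [InnerProductSpace ℝ V] [CompleteSpace V]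
    (K : Set V) (hKne : K.Nonempty) (hKcl : IsClosed K) (hKco : Convex ℝ K)
    (a : V →L[ℝ] V →L[ℝ] ℝ)
    (m : ℝ) (hm : 0 < m) (hcoer : ∀ v : V, m * ‖v‖ ^ 2 ≤ a v v)
    (g : V →L[ℝ] ℝ) :
    ∃! u : V, u ∈ K ∧ ∀ v ∈ K, g (v - u) ≤ a u (v - u) := by
  set A := continuousLinearMapOfBilin (𝕜 := ℝ) a
  have hA : ∀ u v, ⟪A u, v⟫ = a u v := continuousLinearMapOfBilin_apply a
  have hf : ∀ v, ⟪(toDual ℝ V).symm g, v⟫ = g v := fun v ↦ toDual_symm_apply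
  obtain ⟨u, huK, hu⟩ := exists_mem_forall_real_inner_le_of_coercive hKne hKcl hKco A hm
    (fun v ↦ (hA v v).symm ▸ hcoer v) ((toDual ℝ V).symm g)
  refine ⟨u, ⟨huK, fun v hv ↦ ?_⟩, fun u' ⟨hu'K, hu'⟩ ↦ ?_⟩
  · simpa only [hA, hf] using hu v hv
  · exact eq_of_le_apply_sub_of_coercive a g hm hcoer (by simpa only [hA, hf] using hu u' hu'K)
      (hu' u huK)

/-- Lions–Stampacchia theorem: existence and uniqueness of the solution of an
elliptic variational inequality on a nonempty closed convex set. -/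
theorem stmt_0 {V : Type*} [NormedAddCommGroup V] [InnerProductSpace ℝ V] [CompleteSpace V]
    (K : Set V) (hKne : K.Nonempty) (hKcl : IsClosed K) (hKco : Convex ℝ K)
    (a : V →L[ℝ] V →L[ℝ] ℝ) (hsym : ∀ u v : V, a u v = a v u)
    (m : ℝ) (hm : 0 < m) (hcoer : ∀ v : V, m * ‖v‖ ^ 2 ≤ a v v)
    (g : V →L[ℝ] ℝ) :
    ∃! u : V, u ∈ K ∧ ∀ v ∈ K, g (v - u) ≤ a u (v - u) :=
  stmt_0_general K hKne hKcl hKco a m hm hcoer g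
end

section
/- Let $u_1, u_2 \in K$ be the solutions of the variational inequality $a(u_i, v - u_i) \ge \langle g_i, v - u_i \rangle$ for all $v \in K$ ($i = 1, 2$). For $\mu \in [0,1]$ set $u_3(\mu) = \mu u_1 + (1-\mu) u_2$, $g_3(\mu) = \mu g_1 + (1-\mu) g_2$, and let $u_4(\mu)$ be the solution with source $g_3(\mu)$. Define $\alpha = a(u_1, u_2 - u_1) - \langle g_1, u_2 - u_1 \rangle$, $\beta = a(u_2, u_1 - u_2) - \langle g_2, u_1 - u_2 \rangle$, $I_{14}(\mu) = a(u_1, u_4(\mu) - u_1) - \langle g_1, u_4(\mu) - u_1 \rangle$, and $I_{24}(\mu) = a(u_2, u_4(\mu) - u_2) - \langle g_2, u_4(\mu) - u_2 \rangle$. Then for all $\mu \in [0,1]$: $m \|u_4(\mu) - u_3(\mu)\|^2 + \mu I_{14}(\mu) + (1-\mu) I_{24}(\mu) \le \mu(1-\mu)(\alpha + \beta)$. -/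
/-- Theorem 2.1: error estimate between the convex combination `u₃(μ)` of solutions
and the solution `u₄(μ)` with convex-combination source. -/
theorem stmt_1 {V : Type*} [NormedAddCommGroup V] [InnerProductSpace ℝ V] [CompleteSpace V]
    (K : Set V) (hKne : K.Nonempty) (hKcl : IsClosed K) (hKco : Convex ℝ K)
    (a : V →L[ℝ] V →L[ℝ] ℝ) (hsym : ∀ u v : V, a u v = a v u)
    (m : ℝ) (hm : 0 < m) (hcoer : ∀ v : V, m * ‖v‖ ^ 2 ≤ a v v)
    (g₁ g₂ : V →L[ℝ] ℝ) (u₁ u₂ : V) (u₄ : ℝ → V)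
    (hu₁ : u₁ ∈ K ∧ ∀ v ∈ K, g₁ (v - u₁) ≤ a u₁ (v - u₁))
    (hu₂ : u₂ ∈ K ∧ ∀ v ∈ K, g₂ (v - u₂) ≤ a u₂ (v - u₂))
    (hu₄ : ∀ μ ∈ Set.Icc (0 : ℝ) 1, u₄ μ ∈ K ∧
      ∀ v ∈ K, (μ • g₁ + (1 - μ) • g₂) (v - u₄ μ) ≤ a (u₄ μ) (v - u₄ μ)) :
    ∀ μ ∈ Set.Icc (0 : ℝ) 1,
      m * ‖u₄ μ - (μ • u₁ + (1 - μ) • u₂)‖ ^ 2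
        + μ * (a u₁ (u₄ μ - u₁) - g₁ (u₄ μ - u₁))
        + (1 - μ) * (a u₂ (u₄ μ - u₂) - g₂ (u₄ μ - u₂))
      ≤ μ * (1 - μ) *
          ((a u₁ (u₂ - u₁) - g₁ (u₂ - u₁)) + (a u₂ (u₁ - u₂) - g₂ (u₁ - u₂))) := by
  intro μ hμ
  obtain ⟨hμ0, hμ1⟩ := hμ
  have hK3 : μ • u₁ + (1 - μ) • u₂ ∈ K :=
    hKco hu₁.1 hu₂.1 hμ0 (by linarith) (by ring)
  have h4 := (hu₄ μ ⟨hμ0, hμ1⟩).2 _ hK3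
  have hc := hcoer (u₄ μ - (μ • u₁ + (1 - μ) • u₂))
  set x := u₄ μ with hx
  simp only [ContinuousLinearMap.add_apply, ContinuousLinearMap.smul_apply, map_sub, map_add,
    map_smul, smul_eq_mul, ContinuousLinearMap.sub_apply, ContinuousLinearMap.coe_sub',
    ContinuousLinearMap.coe_smul', Pi.sub_apply, Pi.smul_apply] at h4 hc ⊢
  nlinarith [hc, h4, hsym u₁ u₂, hsym x u₁, hsym x u₂, hsym u₁ x, sq_nonneg μ]
end

section
/- With the previous notation, for every $\mu \in [0,1]$: $m^2\|u_3(\mu) - u_4(\mu)\|^2 + \mu(1-\mu) m^2 \|u_1 - u_2\|^2 + m\,\mu\, I_{14}(\mu) + m(1-\mu) I_{24}(\mu) \le \mu(1-\mu)\|g_1 - g_2\|_{V'}^2$. -/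
/-!
Put `w = u₁ - u₂`, `u₃ = μ u₁ + (1 - μ) u₂` and `g = μ g₁ + (1 - μ) g₂`. The defect
`D(g, u, v) = a(u, v - u) - g(v - u)` is affine in `v`, and averaging it over `(g₁, u₁)` and
`(g₂, u₂)` produces `D(g, u₃, v)` up to the correction `μ (1 - μ) ((g₁ - g₂) w - a(w, w))`.
Testing the inequality of `u₄` at `u₃ ∈ K` and using coercivity on `u₃ - u₄` gives
`m ‖u₃ - u₄‖² + μ I₁₄ + (1 - μ) I₂₄ ≤ μ (1 - μ) ((g₁ - g₂) w - a(w, w))`. Testing the inequalities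
of `u₁` and `u₂` at each other gives `m ‖w‖² ≤ a(w, w) ≤ (g₁ - g₂) w ≤ ‖g₁ - g₂‖ ‖w‖`, which
bounds the right-hand side after multiplication by `m`.
-/

section VariationalInequality

variable {V : Type*} [SeminormedAddCommGroup V] [NormedSpace ℝ V]
  {K : Set V} {a : V →L[ℝ] V →L[ℝ] ℝ} {g g₁ g₂ : V →L[ℝ] ℝ} {u u₁ u₂ v : V} {m : ℝ}

def IsVISolution (K : Set V) (a : V →L[ℝ] V →L[ℝ] ℝ) (g : V →L[ℝ] ℝ) (u : V) : Prop :=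
  u ∈ K ∧ ∀ v ∈ K, g (v - u) ≤ a u (v - u)

/-- The paper's `I`, e.g. `I₁₄(μ) = viDefect a g₁ u₁ (u₄ μ)`. -/
noncomputable def viDefect (a : V →L[ℝ] V →L[ℝ] ℝ) (g : V →L[ℝ] ℝ) (u v : V) : ℝ :=
  a u (v - u) - g (v - u)

theorem IsVISolution.viDefect_nonneg (hu : IsVISolution K a g u) (hv : v ∈ K) :
    0 ≤ viDefect a g u v :=
  sub_nonneg.2 (hu.2 v hv)

theorem viDefect_add_viDefect (a : V →L[ℝ] V →L[ℝ] ℝ) (g : V →L[ℝ] ℝ) (u v : V) :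
    viDefect a g u v + viDefect a g v u = -a (u - v) (u - v) := by
  simp only [viDefect, map_sub, sub_apply]
  ring

theorem viDefect_convexComb (a : V →L[ℝ] V →L[ℝ] ℝ) (g₁ g₂ : V →L[ℝ] ℝ) (u₁ u₂ v : V)
    (μ : ℝ) :
    viDefect a (μ • g₁ + (1 - μ) • g₂) (μ • u₁ + (1 - μ) • u₂) v
      = μ * viDefect a g₁ u₁ v + (1 - μ) * viDefect a g₂ u₂ v
        - μ * (1 - μ) * ((g₁ - g₂) (u₁ - u₂) - a (u₁ - u₂) (u₁ - u₂)) := by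
  simp only [viDefect, map_sub, map_add, map_smul, sub_apply,
    add_apply, smul_apply, smul_eq_mul]
  ring

theorem IsVISolution.apply_sub_le (hu₁ : IsVISolution K a g₁ u₁)
    (hu₂ : IsVISolution K a g₂ u₂) :
    a (u₁ - u₂) (u₁ - u₂) ≤ (g₁ - g₂) (u₁ - u₂) := by
  have h₁₂ := hu₁.viDefect_nonneg hu₂.1
  have h₂₁ := hu₂.viDefect_nonneg hu₁.1
  simp only [viDefect, map_sub, sub_apply] at h₁₂ h₂₁ ⊢
  linarith

theorem IsVISolution.mul_norm_sub_le (hu₁ : IsVISolution K a g₁ u₁)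
    (hu₂ : IsVISolution K a g₂ u₂) (hcoer : ∀ v, m * ‖v‖ ^ 2 ≤ a v v) :
    m * ‖u₁ - u₂‖ ≤ ‖g₁ - g₂‖ := by
  rcases (norm_nonneg (u₁ - u₂)).eq_or_lt with hw | hw
  · rw [← hw, mul_zero]
    exact norm_nonneg _
  · refine le_of_mul_le_mul_right ?_ hw
    calc m * ‖u₁ - u₂‖ * ‖u₁ - u₂‖ = m * ‖u₁ - u₂‖ ^ 2 := by ring
      _ ≤ a (u₁ - u₂) (u₁ - u₂) := hcoer _
      _ ≤ (g₁ - g₂) (u₁ - u₂) := hu₁.apply_sub_le hu₂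
      _ ≤ ‖g₁ - g₂‖ * ‖u₁ - u₂‖ := ((g₁ - g₂).le_opNorm _).trans' (le_abs_self _)

theorem IsVISolution.mul_sub_apply_le (hu₁ : IsVISolution K a g₁ u₁)
    (hu₂ : IsVISolution K a g₂ u₂) (hcoer : ∀ v, m * ‖v‖ ^ 2 ≤ a v v) (hm : 0 ≤ m) :
    m * ((g₁ - g₂) (u₁ - u₂) - a (u₁ - u₂) (u₁ - u₂))
      ≤ ‖g₁ - g₂‖ ^ 2 - m ^ 2 * ‖u₁ - u₂‖ ^ 2 := by
  have hdual : (g₁ - g₂) (u₁ - u₂) ≤ ‖g₁ - g₂‖ * ‖u₁ - u₂‖ :=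
    ((g₁ - g₂).le_opNorm _).trans' (le_abs_self _)
  linarith [mul_le_mul_of_nonneg_left hdual hm, mul_le_mul_of_nonneg_left (hcoer (u₁ - u₂)) hm,
    mul_le_mul_of_nonneg_left (hu₁.mul_norm_sub_le hu₂ hcoer) (norm_nonneg (g₁ - g₂))]

theorem IsVISolution.error_estimate {μ : ℝ} {u₄ : V}
    (hu₄ : IsVISolution K a (μ • g₁ + (1 - μ) • g₂) u₄) (hu₃ : μ • u₁ + (1 - μ) • u₂ ∈ K)
    (hcoer : ∀ v, m * ‖v‖ ^ 2 ≤ a v v) :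
    m * ‖(μ • u₁ + (1 - μ) • u₂) - u₄‖ ^ 2
        + μ * viDefect a g₁ u₁ u₄ + (1 - μ) * viDefect a g₂ u₂ u₄
      ≤ μ * (1 - μ) * ((g₁ - g₂) (u₁ - u₂) - a (u₁ - u₂) (u₁ - u₂)) := by
  have hcoer₃₄ := hcoer ((μ • u₁ + (1 - μ) • u₂) - u₄)
  have hsum := viDefect_add_viDefect a (μ • g₁ + (1 - μ) • g₂) (μ • u₁ + (1 - μ) • u₂) u₄
  rw [viDefect_convexComb] at hsum
  linarith [hu₄.viDefect_nonneg hu₃]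

end VariationalInequality

theorem stmt_5_general {V : Type*} [NormedAddCommGroup V] [InnerProductSpace ℝ V]
    (K : Set V) (hKco : Convex ℝ K)
    (a : V →L[ℝ] V →L[ℝ] ℝ)
    (m : ℝ) (hm : 0 < m) (hcoer : ∀ v : V, m * ‖v‖ ^ 2 ≤ a v v)
    (g₁ g₂ : V →L[ℝ] ℝ) (u₁ u₂ : V) (u₄ : ℝ → V)
    (hu₁ : u₁ ∈ K ∧ ∀ v ∈ K, g₁ (v - u₁) ≤ a u₁ (v - u₁))
    (hu₂ : u₂ ∈ K ∧ ∀ v ∈ K, g₂ (v - u₂) ≤ a u₂ (v - u₂))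
    (hu₄ : ∀ μ ∈ Set.Icc (0 : ℝ) 1, u₄ μ ∈ K ∧
      ∀ v ∈ K, (μ • g₁ + (1 - μ) • g₂) (v - u₄ μ) ≤ a (u₄ μ) (v - u₄ μ)) :
    ∀ μ ∈ Set.Icc (0 : ℝ) 1,
      m ^ 2 * ‖(μ • u₁ + (1 - μ) • u₂) - u₄ μ‖ ^ 2
        + μ * (1 - μ) * m ^ 2 * ‖u₁ - u₂‖ ^ 2
        + m * μ * (a u₁ (u₄ μ - u₁) - g₁ (u₄ μ - u₁))
        + m * (1 - μ) * (a u₂ (u₄ μ - u₂) - g₂ (u₄ μ - u₂))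
      ≤ μ * (1 - μ) * ‖g₁ - g₂‖ ^ 2 := by
  intro μ hμ
  have hμ' : 0 ≤ μ * (1 - μ) := mul_nonneg hμ.1 (sub_nonneg.2 hμ.2)
  have hu₃ : μ • u₁ + (1 - μ) • u₂ ∈ K :=
    hKco hu₁.1 hu₂.1 hμ.1 (sub_nonneg.2 hμ.2) (add_sub_cancel _ _)
  have herr := mul_le_mul_of_nonneg_left
    (IsVISolution.error_estimate (hu₄ μ hμ) hu₃ hcoer) hm.le
  have hdual := mul_le_mul_of_nonneg_left
    (IsVISolution.mul_sub_apply_le hu₁ hu₂ hcoer hm.le) hμ'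
  simp only [viDefect] at herr
  linarith

/-- Lemma 4.1 (abstract form): quantitative estimate combining the error estimate of
Theorem 2.1 with the bound on `α + β`. -/
theorem stmt_5 {V : Type*} [NormedAddCommGroup V] [InnerProductSpace ℝ V] [CompleteSpace V]
    (K : Set V) (hKne : K.Nonempty) (hKcl : IsClosed K) (hKco : Convex ℝ K)
    (a : V →L[ℝ] V →L[ℝ] ℝ) (hsym : ∀ u v : V, a u v = a v u)
    (m : ℝ) (hm : 0 < m) (hcoer : ∀ v : V, m * ‖v‖ ^ 2 ≤ a v v)
    (g₁ g₂ : V →L[ℝ] ℝ) (u₁ u₂ : V) (u₄ : ℝ → V)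
    (hu₁ : u₁ ∈ K ∧ ∀ v ∈ K, g₁ (v - u₁) ≤ a u₁ (v - u₁))
    (hu₂ : u₂ ∈ K ∧ ∀ v ∈ K, g₂ (v - u₂) ≤ a u₂ (v - u₂))
    (hu₄ : ∀ μ ∈ Set.Icc (0 : ℝ) 1, u₄ μ ∈ K ∧
      ∀ v ∈ K, (μ • g₁ + (1 - μ) • g₂) (v - u₄ μ) ≤ a (u₄ μ) (v - u₄ μ)) :
    ∀ μ ∈ Set.Icc (0 : ℝ) 1,
      m ^ 2 * ‖(μ • u₁ + (1 - μ) • u₂) - u₄ μ‖ ^ 2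
        + μ * (1 - μ) * m ^ 2 * ‖u₁ - u₂‖ ^ 2
        + m * μ * (a u₁ (u₄ μ - u₁) - g₁ (u₄ μ - u₁))
        + m * (1 - μ) * (a u₂ (u₄ μ - u₂) - g₂ (u₄ μ - u₂))
      ≤ μ * (1 - μ) * ‖g₁ - g₂‖ ^ 2 :=
  stmt_5_general K hKco a m hm hcoer g₁ g₂ u₁ u₂ u₄ hu₁ hu₂ hu₄
end

section
/- Let $V$ be a real Hilbert space compactly embedded in a Hilbert space $H$, $K \subseteq V$ nonempty closed convex, $a$ a continuous symmetric bilinear form on $V$ coercive with constant $m > 0$, and $L \in V'$ fixed. For $g \in H$ let $u_g \in K$ be the unique solution of $a(u_g, v - u_g) \ge (g, v - u_g)_H + \langle L, v - u_g \rangle$ for all $v \in K$. If $g_n \rightharpoonup g$ weakly in $H$, then $u_{g_n} \to u_g$ strongly in $V$. -/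
/-!
Testing the variational inequality for `g` with `u_{g'}` and the one for `g'` with `u_g`, and
adding, coercivity gives `m ‖u_g - u_{g'}‖ ≤ ‖(g - g', T ·)_H‖_{V'}`. The functionals
`(g_n - g, ·)_H` tend to `0` pointwise, hence are uniformly bounded (Banach–Steinhaus) and so
equicontinuous; by Ascoli they tend to `0` uniformly on a compact set containing the image of the
unit ball under `T`, i.e. `‖(g_n - g, T ·)_H‖_{V'} → 0`.
-/

open scoped InnerProductSpace
open Filter Topology

theorem EquicontinuousOn.tendstoUniformlyOn_of_tendsto {ι X α : Type*} [TopologicalSpace X]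
    [UniformSpace α] {F : ι → X → α} {f : X → α} {l : Filter ι} {Q : Set X}
    (hQ : IsCompact Q) (hF : EquicontinuousOn F Q)
    (hFf : ∀ x ∈ Q, Tendsto (fun i => F i x) l (𝓝 (f x))) :
    TendstoUniformlyOn F f l Q := by
  have h := (EquicontinuousOn.tendsto_uniformOnFun_iff_pi' (𝔖 := {Q}) (by simpa using hQ)
    (by simpa using hF) l f).2 (by simpa [tendsto_pi_nhds] using fun x hx => hFf x hx)
  exact UniformOnFun.tendsto_iff_tendstoUniformlyOn.1 h Q rfl

theorem tendsto_norm_comp_of_isCompactOperator {𝕜 E F G : Type*} [RCLike 𝕜]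
    [NormedAddCommGroup E] [NormedSpace 𝕜 E] [NormedAddCommGroup F] [NormedSpace 𝕜 F]
    [CompleteSpace F] [NormedAddCommGroup G] [NormedSpace 𝕜 G]
    {T : E →L[𝕜] F} (hT : IsCompactOperator T) {f : ℕ → F →L[𝕜] G}
    (hf : ∀ y, Tendsto (fun n => f n y) atTop (𝓝 0)) :
    Tendsto (fun n => ‖(f n).comp T‖) atTop (𝓝 0) := by
  obtain ⟨Q, hQ, hTQ⟩ := hT.image_closedBall_subset_compact (𝕜₁ := 𝕜) (f := (T : E →ₗ[𝕜] F)) 1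
  have hbdd : ∃ C, ∀ n, ‖f n‖ ≤ C := banach_steinhaus fun y => by
    obtain ⟨C, hC⟩ := (hf y).norm.bddAbove_range
    exact ⟨C, fun n => hC ⟨n, rfl⟩⟩
  have hequi : Equicontinuous fun n => ⇑(f n) :=
    ((NormedSpace.equicontinuous_TFAE f).out 5 1).1 hbdd
  have hunif : TendstoUniformlyOn (fun n => ⇑(f n)) 0 atTop Q :=
    hequi.equicontinuousOn Q |>.tendstoUniformlyOn_of_tendsto hQ fun y _ => hf y
  rw [Metric.tendsto_nhds]
  intro ε hε
  filter_upwards [Metric.tendstoUniformlyOn_iff.1 hunif (ε / 2) (half_pos hε)] with n hn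
  have hcomp : ‖(f n).comp T‖ ≤ ε / 2 :=
    ContinuousLinearMap.opNorm_le_of_unit_norm (half_pos hε).le fun x hx => by
      simpa using (hn (T x) (hTQ ⟨x, by simp [hx], rfl⟩)).le
  rw [Real.dist_eq, sub_zero, abs_norm]
  linarith

def IsVariationalInequalitySolution {V : Type*} [NormedAddCommGroup V] [NormedSpace ℝ V]
    (a : V →L[ℝ] V →L[ℝ] ℝ) (K : Set V) (φ : V →L[ℝ] ℝ) (u : V) : Prop :=
  u ∈ K ∧ ∀ v ∈ K, φ (v - u) ≤ a u (v - u)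

theorem IsVariationalInequalitySolution.mul_norm_sub_le {V : Type*} [NormedAddCommGroup V]
    [NormedSpace ℝ V] {a : V →L[ℝ] V →L[ℝ] ℝ} {K : Set V} {m : ℝ}
    (hcoer : ∀ v : V, m * ‖v‖ ^ 2 ≤ a v v) {φ₁ φ₂ : V →L[ℝ] ℝ} {u₁ u₂ : V}
    (h₁ : IsVariationalInequalitySolution a K φ₁ u₁)
    (h₂ : IsVariationalInequalitySolution a K φ₂ u₂) :
    m * ‖u₁ - u₂‖ ≤ ‖φ₁ - φ₂‖ := by
  have htest₁ := h₁.2 u₂ h₂.1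
  have htest₂ := h₂.2 u₁ h₁.1
  rw [← neg_sub, map_neg, map_neg] at htest₁
  have hmono : a (u₁ - u₂) (u₁ - u₂) ≤ (φ₁ - φ₂) (u₁ - u₂) := by
    simp only [map_sub, sub_apply] at htest₁ htest₂ ⊢
    linarith
  have hsq : m * ‖u₁ - u₂‖ * ‖u₁ - u₂‖ ≤ ‖φ₁ - φ₂‖ * ‖u₁ - u₂‖ :=
    calc m * ‖u₁ - u₂‖ * ‖u₁ - u₂‖ = m * ‖u₁ - u₂‖ ^ 2 := by ring
      _ ≤ (φ₁ - φ₂) (u₁ - u₂) := (hcoer _).trans hmono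
      _ ≤ ‖φ₁ - φ₂‖ * ‖u₁ - u₂‖ := (le_abs_self _).trans ((φ₁ - φ₂).le_opNorm _)
  rcases (norm_nonneg (u₁ - u₂)).eq_or_lt with h | h
  · rw [← h, mul_zero]
    exact norm_nonneg _
  · exact le_of_mul_le_mul_right hsq h

theorem stmt_10_general {V H : Type*}
    [NormedAddCommGroup V] [InnerProductSpace ℝ V]
    [NormedAddCommGroup H] [InnerProductSpace ℝ H] [CompleteSpace H]
    (T : V →L[ℝ] H) (hT : IsCompactOperator T)
    (K : Set V)
    (a : V →L[ℝ] V →L[ℝ] ℝ)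
    (m : ℝ) (hm : 0 < m) (hcoer : ∀ v : V, m * ‖v‖ ^ 2 ≤ a v v)
    (L : V →L[ℝ] ℝ)
    (u : H → V)
    (hu : ∀ g : H, u g ∈ K ∧
      ∀ v ∈ K, ⟪g, T (v - u g)⟫_ℝ + L (v - u g) ≤ a (u g) (v - u g))
    (g : ℕ → H) (g₀ : H)
    (hweak : ∀ y : H, Tendsto (fun n => ⟪g n, y⟫_ℝ) atTop (nhds ⟪g₀, y⟫_ℝ)) :
    Tendsto (fun n => u (g n)) atTop (nhds (u g₀)) := by
  have hsol (h : H) : IsVariationalInequalitySolution a K ((innerSL ℝ h).comp T + L) (u h) :=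
    ⟨(hu h).1, fun v hv => by simpa using (hu h).2 v hv⟩
  have hdata (n : ℕ) : (innerSL ℝ (g n)).comp T + L - ((innerSL ℝ g₀).comp T + L) =
      (innerSL ℝ (g n - g₀)).comp T := by
    rw [add_sub_add_right_eq_sub, ← ContinuousLinearMap.sub_comp, map_sub]
  have hpointwise (y : H) : Tendsto (fun n => innerSL ℝ (g n - g₀) y) atTop (𝓝 0) := by
    simpa [inner_sub_left] using (hweak y).sub_const ⟪g₀, y⟫_ℝ
  have hdata_tendsto := (tendsto_norm_comp_of_isCompactOperator hT hpointwise).div_const m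
  rw [zero_div] at hdata_tendsto
  rw [tendsto_iff_norm_sub_tendsto_zero]
  refine squeeze_zero (fun _ => norm_nonneg _) (fun n => ?_) hdata_tendsto
  rw [le_div_iff₀' hm, ← hdata n]
  exact (hsol (g n)).mul_norm_sub_le hcoer (hsol g₀)

/-- Lemma 3.1(a), abstract form: if `g_n ⇀ g` weakly in `H`, then the solutions
`u_{g_n}` of the variational inequality converge strongly to `u_g` in `V`; here `V`
is compactly embedded in `H` via `T` and the sources act through the `H`-pairing. -/
theorem stmt_10 {V H : Type*}
    [NormedAddCommGroup V] [InnerProductSpace ℝ V] [CompleteSpace V]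
    [NormedAddCommGroup H] [InnerProductSpace ℝ H] [CompleteSpace H]
    (T : V →L[ℝ] H) (hT : IsCompactOperator T)
    (K : Set V) (hKne : K.Nonempty) (hKcl : IsClosed K) (hKco : Convex ℝ K)
    (a : V →L[ℝ] V →L[ℝ] ℝ) (hsym : ∀ u v : V, a u v = a v u)
    (m : ℝ) (hm : 0 < m) (hcoer : ∀ v : V, m * ‖v‖ ^ 2 ≤ a v v)
    (L : V →L[ℝ] ℝ)
    (u : H → V)
    (hu : ∀ g : H, u g ∈ K ∧
      ∀ v ∈ K, ⟪g, T (v - u g)⟫_ℝ + L (v - u g) ≤ a (u g) (v - u g))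
    (g : ℕ → H) (g₀ : H)
    (hweak : ∀ y : H, Tendsto (fun n => ⟪g n, y⟫_ℝ) atTop (nhds ⟪g₀, y⟫_ℝ)) :
    Tendsto (fun n => u (g n)) atTop (nhds (u g₀)) :=
  stmt_10_general T hT K a m hm hcoer L u hu g g₀ hweak
end

section
/- In the Robin obstacle problem setting: for all $g \in L^2(\Omega)$, $q \in L^2(\Gamma_2)$, $b \in H^{1/2}(\Gamma_1)$ and $0 < h_2 \le h_1$, one has $\|u_{g_{h_2}} - u_{g_{h_1}}\|_{H^1(\Omega)} \le \frac{\|\gamma_0\|}{\lambda_1 \min(1, h_2)} \|b - u_{g_{h_1}}\|_{L^2(\Gamma_1)} (h_1 - h_2)$, where $\gamma_0$ is the trace operator from $H^1(\Omega)$ to $L^2(\Gamma_1)$ and $\lambda_1 \min(1,h)$ is the coercivity constant of $a_h$. -/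
open scoped InnerProductSpace

/-!
Testing the inequality for `u_{h₁}` with `u_{h₂}` and vice versa, and adding, leaves
`a_{h₂}(w, w) ≤ (h₁ - h₂) (γ u_{h₁} - b, γ w)` for `w = u_{h₂} - u_{h₁}`, since `a_{h₁} - a_{h₂}`
and the difference of the right-hand sides only involve the boundary term `h ∫_{Γ₁}`.
Coercivity of `a_{h₂}` bounds the left side below by `λ₁ min(1, h₂) ‖w‖²`, and Cauchy–Schwarz with
the trace bound `‖γ w‖ ≤ ‖γ‖ ‖w‖` bounds the right side by `(h₁ - h₂) ‖γ‖ ‖b - γ u_{h₁}‖ ‖w‖`.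
-/

section VariationalInequality

variable {R M : Type*} [CommRing R] [PartialOrder R] [IsOrderedAddMonoid R]
  [AddCommGroup M] [Module R M]

def IsVariationalSolution (K : Set M) (A : LinearMap.BilinForm R M) (f : Module.Dual R M)
    (u : M) : Prop :=
  u ∈ K ∧ ∀ v ∈ K, f (v - u) ≤ A u (v - u)

theorem IsVariationalSolution.apply_sub_sub_le {K : Set M} {A₁ A₂ : LinearMap.BilinForm R M}
    {f₁ f₂ : Module.Dual R M} {u₁ u₂ : M} (hu₁ : IsVariationalSolution K A₁ f₁ u₁)
    (hu₂ : IsVariationalSolution K A₂ f₂ u₂) :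
    A₂ (u₂ - u₁) (u₂ - u₁) ≤ (f₂ - f₁) (u₂ - u₁) + (A₁ - A₂) u₁ (u₂ - u₁) := by
  have h₁ := hu₁.2 u₂ hu₂.1
  have h₂ := hu₂.2 u₁ hu₁.1
  rw [← neg_sub u₂ u₁, map_neg, map_neg, neg_le_neg_iff] at h₂
  calc A₂ (u₂ - u₁) (u₂ - u₁) = A₂ u₂ (u₂ - u₁) - A₂ u₁ (u₂ - u₁) := by
        rw [LinearMap.map_sub₂]
    _ ≤ f₂ (u₂ - u₁) + (A₁ u₁ (u₂ - u₁) - f₁ (u₂ - u₁)) - A₂ u₁ (u₂ - u₁) :=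
        sub_le_sub_right (le_add_of_le_of_nonneg h₂ (sub_nonneg.2 h₁)) _
    _ = (f₂ - f₁) (u₂ - u₁) + (A₁ - A₂) u₁ (u₂ - u₁) := by
        simp only [LinearMap.sub_apply]
        abel

end VariationalInequality

theorem le_div_of_mul_sq_le_mul {c k x : ℝ} (hc : 0 < c) (hk : 0 ≤ k) (hx : 0 ≤ x)
    (h : c * x ^ 2 ≤ k * x) : x ≤ k / c := by
  rw [le_div_iff₀ hc]
  rcases hx.eq_or_lt with rfl | hx
  · simpa using hk
  · nlinarith

section Robin

variable {V B : Type*} [NormedAddCommGroup V] [InnerProductSpace ℝ V]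
  [NormedAddCommGroup B] [InnerProductSpace ℝ B]

-- `robinForm a γ h` is the paper's `a_h`, and `robinLoad ℓ γ b h` its right-hand side
-- `ℓ + h ∫_{Γ₁} b v`.
noncomputable def robinForm (a : LinearMap.BilinForm ℝ V) (γ : V →L[ℝ] B) (h : ℝ) :
    LinearMap.BilinForm ℝ V :=
  a + h • (innerₗ B).compl₁₂ γ γ

noncomputable def robinLoad (ℓ : Module.Dual ℝ V) (γ : V →L[ℝ] B) (b : B) (h : ℝ) :
    Module.Dual ℝ V :=
  ℓ + h • (innerₗ B b).comp (γ : V →ₗ[ℝ] B)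

theorem robinForm_apply (a : LinearMap.BilinForm ℝ V) (γ : V →L[ℝ] B) (h : ℝ) (u v : V) :
    robinForm a γ h u v = a u v + h * ⟪γ u, γ v⟫_ℝ := rfl

theorem robinLoad_apply (ℓ : Module.Dual ℝ V) (γ : V →L[ℝ] B) (b : B) (h : ℝ) (v : V) :
    robinLoad ℓ γ b h v = ℓ v + h * ⟪b, γ v⟫_ℝ := rfl

theorem robin_apply_sub_sub_le {K : Set V} {a : LinearMap.BilinForm ℝ V} {γ : V →L[ℝ] B}
    {ℓ : Module.Dual ℝ V} {b : B} {h₁ h₂ : ℝ} {u₁ u₂ : V}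
    (hu₁ : IsVariationalSolution K (robinForm a γ h₁) (robinLoad ℓ γ b h₁) u₁)
    (hu₂ : IsVariationalSolution K (robinForm a γ h₂) (robinLoad ℓ γ b h₂) u₂) :
    robinForm a γ h₂ (u₂ - u₁) (u₂ - u₁) ≤ (h₁ - h₂) * ⟪γ u₁ - b, γ (u₂ - u₁)⟫_ℝ := by
  refine (hu₁.apply_sub_sub_le hu₂).trans_eq ?_
  simp only [LinearMap.sub_apply, robinForm_apply, robinLoad_apply, inner_sub_left]
  ring

theorem robin_norm_sub_le {K : Set V} {a : LinearMap.BilinForm ℝ V} {γ : V →L[ℝ] B}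
    {ℓ : Module.Dual ℝ V} {b : B} {h₁ h₂ c : ℝ} {u₁ u₂ : V} (hc : 0 < c)
    (hcoer : ∀ v, c * ‖v‖ ^ 2 ≤ robinForm a γ h₂ v v) (hh : h₂ ≤ h₁)
    (hu₁ : IsVariationalSolution K (robinForm a γ h₁) (robinLoad ℓ γ b h₁) u₁)
    (hu₂ : IsVariationalSolution K (robinForm a γ h₂) (robinLoad ℓ γ b h₂) u₂) :
    ‖u₂ - u₁‖ ≤ ‖γ‖ / c * ‖b - γ u₁‖ * (h₁ - h₂) := by
  have hcs : ⟪γ u₁ - b, γ (u₂ - u₁)⟫_ℝ ≤ ‖γ‖ * ‖b - γ u₁‖ * ‖u₂ - u₁‖ :=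
    calc ⟪γ u₁ - b, γ (u₂ - u₁)⟫_ℝ ≤ ‖γ u₁ - b‖ * ‖γ (u₂ - u₁)‖ := real_inner_le_norm _ _
      _ ≤ ‖b - γ u₁‖ * (‖γ‖ * ‖u₂ - u₁‖) := by
        rw [norm_sub_rev]; gcongr; exact γ.le_opNorm _
      _ = ‖γ‖ * ‖b - γ u₁‖ * ‖u₂ - u₁‖ := by ring
  have hdh : 0 ≤ h₁ - h₂ := sub_nonneg.2 hh
  rw [div_mul_eq_mul_div, div_mul_eq_mul_div, mul_right_comm]
  refine le_div_of_mul_sq_le_mul hc (by positivity) (norm_nonneg _) ?_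
  calc c * ‖u₂ - u₁‖ ^ 2 ≤ (h₁ - h₂) * ⟪γ u₁ - b, γ (u₂ - u₁)⟫_ℝ :=
        (hcoer _).trans (robin_apply_sub_sub_le hu₁ hu₂)
    _ ≤ (h₁ - h₂) * (‖γ‖ * ‖b - γ u₁‖ * ‖u₂ - u₁‖) := by gcongr
    _ = _ := by ring

end Robin

theorem stmt_14_general {V H B₁ B₂ : Type*}
    [NormedAddCommGroup V] [InnerProductSpace ℝ V] [Lattice V]
    [NormedAddCommGroup H] [InnerProductSpace ℝ H]
    [NormedAddCommGroup B₁] [InnerProductSpace ℝ B₁]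
    [NormedAddCommGroup B₂] [InnerProductSpace ℝ B₂]
    (ι : V →L[ℝ] H)
    (γ₁ : V →L[ℝ] B₁) (γ₂ : V →L[ℝ] B₂)
    (a : V →L[ℝ] V →L[ℝ] ℝ)
    (lam₁ : ℝ) (hlam₁ : 0 < lam₁)
    (hcoer : ∀ h : ℝ, 0 < h → ∀ v : V,
      lam₁ * min 1 h * ‖v‖ ^ 2 ≤ a v v + h * ⟪γ₁ v, γ₁ v⟫_ℝ)
    (b : B₁) (q : B₂) (g : H)
    (h₁ h₂ : ℝ) (hh₂ : 0 < h₂) (hh : h₂ ≤ h₁)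
    (u₁ u₂ : V) (hu₁₀ : 0 ≤ u₁) (hu₂₀ : 0 ≤ u₂)
    (hu₁ : ∀ v : V, 0 ≤ v →
      ⟪g, ι (v - u₁)⟫_ℝ - ⟪q, γ₂ (v - u₁)⟫_ℝ + h₁ * ⟪b, γ₁ (v - u₁)⟫_ℝ
        ≤ a u₁ (v - u₁) + h₁ * ⟪γ₁ u₁, γ₁ (v - u₁)⟫_ℝ)
    (hu₂ : ∀ v : V, 0 ≤ v →
      ⟪g, ι (v - u₂)⟫_ℝ - ⟪q, γ₂ (v - u₂)⟫_ℝ + h₂ * ⟪b, γ₁ (v - u₂)⟫_ℝ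
        ≤ a u₂ (v - u₂) + h₂ * ⟪γ₁ u₂, γ₁ (v - u₂)⟫_ℝ) :
    ‖u₂ - u₁‖ ≤ ‖γ₁‖ / (lam₁ * min 1 h₂) * ‖b - γ₁ u₁‖ * (h₁ - h₂) := by
  let ℓ : Module.Dual ℝ V :=
    (innerₗ H g).comp (ι : V →ₗ[ℝ] H) - (innerₗ B₂ q).comp (γ₂ : V →ₗ[ℝ] B₂)
  -- `hu₁` and `hu₂` are the two variational inequalities on `Set.Ici 0`, unfolded.
  exact robin_norm_sub_le (K := Set.Ici 0) (a := a.toLinearMap₁₂) (ℓ := ℓ)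
    (mul_pos hlam₁ (lt_min one_pos hh₂)) (hcoer h₂ hh₂) hh ⟨hu₁₀, hu₁⟩ ⟨hu₂₀, hu₂⟩

/-- Lemma 3.2, estimate (3.17): Lipschitz-type dependence of the Robin obstacle-problem
solution on the heat transfer coefficient:
`‖u_{g_{h₂}} - u_{g_{h₁}}‖_V ≤ (‖γ₀‖ / (λ₁ min(1,h₂))) ‖b - u_{g_{h₁}}‖_{L²(Γ₁)} (h₁ - h₂)`,
for any `g`, `q`, `b` and `0 < h₂ ≤ h₁`. -/
theorem stmt_14 {V H B₁ B₂ : Type*}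
    [NormedAddCommGroup V] [InnerProductSpace ℝ V] [CompleteSpace V] [Lattice V]
    [NormedAddCommGroup H] [Lattice H] [IsOrderedAddMonoid H] [HasSolidNorm H] [InnerProductSpace ℝ H] [CompleteSpace H]
    [NormedAddCommGroup B₁] [Lattice B₁] [IsOrderedAddMonoid B₁] [HasSolidNorm B₁] [InnerProductSpace ℝ B₁] [CompleteSpace B₁]
    [NormedAddCommGroup B₂] [Lattice B₂] [IsOrderedAddMonoid B₂] [HasSolidNorm B₂] [InnerProductSpace ℝ B₂] [CompleteSpace B₂]
    (ι : V →L[ℝ] H) (hι : ∀ u v : V, u ≤ v ↔ ι u ≤ ι v)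
    (γ₁ : V →L[ℝ] B₁) (γ₂ : V →L[ℝ] B₂)
    (a : V →L[ℝ] V →L[ℝ] ℝ) (hsym : ∀ u v : V, a u v = a v u)
    (lam₁ : ℝ) (hlam₁ : 0 < lam₁)
    (hcoer : ∀ h : ℝ, 0 < h → ∀ v : V,
      lam₁ * min 1 h * ‖v‖ ^ 2 ≤ a v v + h * ⟪γ₁ v, γ₁ v⟫_ℝ)
    (b : B₁) (q : B₂) (g : H)
    (h₁ h₂ : ℝ) (hh₂ : 0 < h₂) (hh : h₂ ≤ h₁)
    (u₁ u₂ : V) (hu₁₀ : 0 ≤ u₁) (hu₂₀ : 0 ≤ u₂)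
    (hu₁ : ∀ v : V, 0 ≤ v →
      ⟪g, ι (v - u₁)⟫_ℝ - ⟪q, γ₂ (v - u₁)⟫_ℝ + h₁ * ⟪b, γ₁ (v - u₁)⟫_ℝ
        ≤ a u₁ (v - u₁) + h₁ * ⟪γ₁ u₁, γ₁ (v - u₁)⟫_ℝ)
    (hu₂ : ∀ v : V, 0 ≤ v →
      ⟪g, ι (v - u₂)⟫_ℝ - ⟪q, γ₂ (v - u₂)⟫_ℝ + h₂ * ⟪b, γ₁ (v - u₂)⟫_ℝ
        ≤ a u₂ (v - u₂) + h₂ * ⟪γ₁ u₂, γ₁ (v - u₂)⟫_ℝ) :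
    ‖u₂ - u₁‖ ≤ ‖γ₁‖ / (lam₁ * min 1 h₂) * ‖b - γ₁ u₁‖ * (h₁ - h₂) :=
  stmt_14_general ι γ₁ γ₂ a lam₁ hlam₁ hcoer b q g h₁ h₂ hh₂ hh u₁ u₂ hu₁₀ hu₂₀ hu₁ hu₂
end

section
/- In the mixed obstacle problem setting: for every fixed $g \in L^2(\Omega)$, the solutions $u_{g_h}$ of the Robin variational inequality converge strongly in $H^1(\Omega)$ to the solution $u_g$ of the Dirichlet variational inequality as $h \to +\infty$. -/
open scoped InnerProductSpace
open Filter Topology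

/-!
The Robin solution `u h` minimizes on `K` the penalized energy
`½ a(v, v) + (h/2) ‖γ v - b‖² - F v`, with quadratic growth around the minimizer. Testing this at
`u t` for `1 ≤ s ≤ t` shows that the minimal energies increase with `h` at a rate controlling
`‖u t - u s‖²`, and testing at the Dirichlet solution `uD` bounds them by its energy. Hence `u`
is Cauchy, with no need for weak compactness. The energy bound forces `γ w = b` for the limit
`w`; the penalized inequalities tested at `uD` pass to the limit and, added to the Dirichlet
inequality tested at `w`, give `a(w - uD, w - uD) ≤ 0`, so `w = uD`.
-/

lemma cauchySeq_of_sq_dist_le_sub {ι X : Type*} [SemilatticeSup ι] [Nonempty ι]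
    [PseudoMetricSpace X] {u : ι → X} {e : ι → ℝ} {c : ℝ} (hc : 0 < c)
    (he : BddAbove (Set.range e)) (hue : ∀ s t, s ≤ t → c * dist (u t) (u s) ^ 2 ≤ e t - e s) :
    CauchySeq u := by
  have he_mono : Monotone e := fun s t hst =>
    sub_nonneg.1 ((by positivity : 0 ≤ c * dist (u t) (u s) ^ 2).trans (hue s t hst))
  have he_cauchy : CauchySeq e := (tendsto_atTop_ciSup he_mono he).cauchySeq
  rw [Metric.cauchySeq_iff'] at he_cauchy ⊢
  intro ε hε
  obtain ⟨N, hN⟩ := he_cauchy (c * ε ^ 2) (by positivity)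
  refine ⟨N, fun n hn => lt_of_pow_lt_pow_left₀ 2 hε.le ?_⟩
  have h_gap : e n - e N < c * ε ^ 2 := (le_abs_self _).trans_lt (hN n hn)
  nlinarith [hue N n hn]

lemma eq_of_variationalIneq_of_variationalIneq {V : Type*} [NormedAddCommGroup V]
    [NormedSpace ℝ V] {a : V →L[ℝ] V →L[ℝ] ℝ} {F : V →L[ℝ] ℝ} {lam : ℝ} {x y : V}
    (hlam : 0 < lam) (hcoer : lam * ‖x - y‖ ^ 2 ≤ a (x - y) (x - y))
    (hx : F (y - x) ≤ a x (y - x)) (hy : F (x - y) ≤ a y (x - y)) : x = y := by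
  have hxy : a x (x - y) ≤ a y (x - y) := by
    rw [← neg_sub x y, map_neg, map_neg] at hx
    linarith
  have hsplit : a (x - y) (x - y) = a x (x - y) - a y (x - y) := by simp
  have hnorm : ‖x - y‖ ^ 2 ≤ 0 := by nlinarith
  rw [← sub_eq_zero, ← norm_eq_zero]
  exact pow_eq_zero_iff two_ne_zero |>.1 (le_antisymm hnorm (by positivity))

section Penalty

variable {V B : Type*} [NormedAddCommGroup V] [InnerProductSpace ℝ V]
  [NormedAddCommGroup B] [InnerProductSpace ℝ B]
  (K : Set V) (a : V →L[ℝ] V →L[ℝ] ℝ) (γ : V →L[ℝ] B) (F : V →L[ℝ] ℝ) (b : B)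

noncomputable def penalizedEnergy (h : ℝ) (v : V) : ℝ :=
  a v v / 2 + h / 2 * ‖γ v - b‖ ^ 2 - F v

def IsPenalizedSolution (h : ℝ) (u : V) : Prop :=
  u ∈ K ∧ ∀ v ∈ K, F (v - u) ≤ a u (v - u) + h * ⟪γ u - b, γ (v - u)⟫_ℝ

def IsDirichletSolution (u : V) : Prop :=
  u ∈ K ∧ γ u = b ∧ ∀ v ∈ K, γ v = b → F (v - u) ≤ a u (v - u)

variable {K a γ F b}

lemma penalizedEnergy_mono {h h' : ℝ} (hh : h ≤ h') (v : V) :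
    penalizedEnergy a γ F b h v ≤ penalizedEnergy a γ F b h' v := by
  unfold penalizedEnergy
  gcongr

lemma penalizedEnergy_of_map_eq {h : ℝ} {v : V} (hv : γ v = b) :
    penalizedEnergy a γ F b h v = a v v / 2 - F v := by
  simp [penalizedEnergy, hv]

lemma penalizedEnergy_add (hsym : ∀ u v, a u v = a v u) (h : ℝ) (u d : V) :
    penalizedEnergy a γ F b h (u + d) = penalizedEnergy a γ F b h u
      + (a u d + h * ⟪γ u - b, γ d⟫_ℝ - F d) + (a d d + h * ‖γ d‖ ^ 2) / 2 := by
  have hnorm : ‖γ (u + d) - b‖ ^ 2 = ‖γ u - b‖ ^ 2 + 2 * ⟪γ u - b, γ d⟫_ℝ + ‖γ d‖ ^ 2 := by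
    rw [map_add, add_sub_right_comm, norm_add_sq_real]
  rw [penalizedEnergy, penalizedEnergy, hnorm]
  simp only [map_add, add_apply, hsym d u]
  ring

lemma IsPenalizedSolution.penalizedEnergy_add_le (hsym : ∀ u v, a u v = a v u) {h : ℝ} {u v : V}
    (hu : IsPenalizedSolution K a γ F b h u) (hv : v ∈ K) :
    penalizedEnergy a γ F b h u + (a (v - u) (v - u) + h * ‖γ (v - u)‖ ^ 2) / 2
      ≤ penalizedEnergy a γ F b h v := by
  have hexp := penalizedEnergy_add (γ := γ) (F := F) (b := b) hsym h u (v - u)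
  rw [add_sub_cancel] at hexp
  linarith [hu.2 v hv]

lemma IsPenalizedSolution.variationalIneq_of_map_eq {h : ℝ} {u v : V}
    (hu : IsPenalizedSolution K a γ F b h u) (hh : 0 ≤ h) (hv : v ∈ K) (hvb : γ v = b) :
    F (v - u) ≤ a u (v - u) := by
  have hpenalty : ⟪γ u - b, γ (v - u)⟫_ℝ = -‖γ u - b‖ ^ 2 := by
    rw [map_sub, hvb, ← neg_sub (γ u) b, inner_neg_right, real_inner_self_eq_norm_sq]
  have := hu.2 v hv
  rw [hpenalty] at this
  nlinarith [sq_nonneg ‖γ u - b‖]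

lemma map_eq_of_tendsto_of_penalizedEnergy_le {u : ℝ → V} {w : V} {M : ℝ}
    (hw : Tendsto u atTop (𝓝 w)) (hM : ∀ᶠ h in atTop, penalizedEnergy a γ F b h (u h) ≤ M) :
    γ w = b := by
  have hcont : Continuous fun v => a v v / 2 - F v := by fun_prop
  have hquad : Tendsto (fun h => 2 * (M - (a (u h) (u h) / 2 - F (u h)))) atTop
      (𝓝 (2 * (M - (a w w / 2 - F w)))) :=
    (((hcont.tendsto w).comp hw).const_sub M).const_mul 2
  have hpenalty : Tendsto (fun h => ‖γ (u h) - b‖ ^ 2) atTop (𝓝 (‖γ w - b‖ ^ 2)) :=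
    ((((γ.continuous.tendsto w).comp hw).sub_const b).norm).pow 2
  have hnonpos : ‖γ w - b‖ ^ 2 ≤ 0 := by
    refine le_of_tendsto_of_tendsto hpenalty (hquad.div_atTop tendsto_id) ?_
    filter_upwards [hM, eventually_gt_atTop 0] with h hMh hh
    rw [id, le_div_iff₀ hh]
    unfold penalizedEnergy at hMh
    linarith
  rw [← sub_eq_zero, ← norm_eq_zero]
  exact pow_eq_zero_iff two_ne_zero |>.1 (le_antisymm hnonpos (by positivity))

section Coercive

variable {lam : ℝ} (hcoer : ∀ v, lam * ‖v‖ ^ 2 ≤ a v v + ‖γ v‖ ^ 2)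
include hcoer

lemma coercive_of_one_le {h : ℝ} (hh : 1 ≤ h) (v : V) :
    lam * ‖v‖ ^ 2 ≤ a v v + h * ‖γ v‖ ^ 2 := by
  nlinarith [hcoer v, sq_nonneg ‖γ v‖]

variable (hsym : ∀ u v, a u v = a v u) {u : ℝ → V}
  (hu : ∀ h, 1 ≤ h → IsPenalizedSolution K a γ F b h (u h))
include hsym hu

lemma penalizedEnergy_solution_le (hlam : 0 ≤ lam) {h : ℝ} (hh : 1 ≤ h) {v : V} (hv : v ∈ K) :
    penalizedEnergy a γ F b h (u h) ≤ penalizedEnergy a γ F b h v := by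
  have hquad := coercive_of_one_le hcoer hh (v - u h)
  have := (hu h hh).penalizedEnergy_add_le hsym hv
  nlinarith [sq_nonneg ‖v - u h‖]

lemma sq_dist_le_penalizedEnergy_sub {s t : ℝ} (hs : 1 ≤ s) (hst : s ≤ t) :
    lam / 2 * dist (u t) (u s) ^ 2
      ≤ penalizedEnergy a γ F b t (u t) - penalizedEnergy a γ F b s (u s) := by
  have hquad := coercive_of_one_le hcoer hs (u t - u s)
  have hgrowth := (hu s hs).penalizedEnergy_add_le hsym (hu t (hs.trans hst)).1
  have hmono := penalizedEnergy_mono (a := a) (γ := γ) (F := F) (b := b) hst (u t)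
  rw [dist_eq_norm]
  linarith

lemma exists_tendsto_of_penalizedEnergy_le [CompleteSpace V] (hlam : 0 < lam) {M : ℝ}
    (hM : ∀ h, 1 ≤ h → penalizedEnergy a γ F b h (u h) ≤ M) : ∃ w, Tendsto u atTop (𝓝 w) := by
  have hcauchy : CauchySeq fun h => u (max h 1) := by
    refine cauchySeq_of_sq_dist_le_sub
      (e := fun h => penalizedEnergy a γ F b (max h 1) (u (max h 1)))
      (half_pos hlam) ⟨M, ?_⟩ fun s t hst => ?_
    · rintro _ ⟨h, rfl⟩
      exact hM _ (le_max_right h 1)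
    · exact sq_dist_le_penalizedEnergy_sub hcoer hsym hu (le_max_right s 1)
        (max_le_max_right 1 hst)
  obtain ⟨w, hw⟩ := cauchySeq_tendsto_of_complete hcauchy
  exact ⟨w, hw.congr' <| (eventually_ge_atTop 1).mono fun h hh => by simp only [max_eq_left hh]⟩

theorem tendsto_of_isPenalizedSolution [CompleteSpace V] (hK : IsClosed K) (hlam : 0 < lam)
    {uD : V} (huD : IsDirichletSolution K a γ F b uD) : Tendsto u atTop (𝓝 uD) := by
  obtain ⟨huDK, huDb, huDvi⟩ := huD
  have henergy_le : ∀ h, 1 ≤ h → penalizedEnergy a γ F b h (u h) ≤ a uD uD / 2 - F uD := fun h hh =>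
    (penalizedEnergy_solution_le hcoer hsym hu hlam.le hh huDK).trans_eq
      (penalizedEnergy_of_map_eq huDb)
  obtain ⟨w, hw⟩ := exists_tendsto_of_penalizedEnergy_le hcoer hsym hu hlam henergy_le
  have hwK : w ∈ K :=
    hK.mem_of_tendsto hw ((eventually_ge_atTop 1).mono fun h hh => (hu h hh).1)
  have hwb : γ w = b := map_eq_of_tendsto_of_penalizedEnergy_le hw
    ((eventually_ge_atTop 1).mono henergy_le)
  have hw_vi : F (uD - w) ≤ a w (uD - w) :=
    (isClosed_le (f := fun v => F (uD - v)) (g := fun v => a v (uD - v)) (by fun_prop)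
      (by fun_prop)).mem_of_tendsto hw <|
      (eventually_ge_atTop 1).mono fun h hh =>
        (hu h hh).variationalIneq_of_map_eq (zero_le_one.trans hh) huDK huDb
  have hcoer_w : lam * ‖w - uD‖ ^ 2 ≤ a (w - uD) (w - uD) := by
    simpa [map_sub, huDb, hwb] using hcoer (w - uD)
  rwa [eq_of_variationalIneq_of_variationalIneq hlam hcoer_w hw_vi (huDvi w hwK hwb)] at hw

end Coercive

end Penalty

theorem stmt_15_general {V H B₁ B₂ : Type*}
    [NormedAddCommGroup V] [InnerProductSpace ℝ V] [CompleteSpace V] [Lattice V]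
    [NormedAddCommGroup H] [Lattice H] [IsOrderedAddMonoid H] [HasSolidNorm H] [InnerProductSpace ℝ H]
    [NormedAddCommGroup B₁] [InnerProductSpace ℝ B₁]
    [NormedAddCommGroup B₂] [InnerProductSpace ℝ B₂]
    (ι : V →L[ℝ] H) (hι : ∀ u v : V, u ≤ v ↔ ι u ≤ ι v)
    (γ₁ : V →L[ℝ] B₁) (γ₂ : V →L[ℝ] B₂)
    (a : V →L[ℝ] V →L[ℝ] ℝ) (hsym : ∀ u v : V, a u v = a v u)
    (lam₁ : ℝ) (hlam₁ : 0 < lam₁)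
    (hcoer : ∀ h : ℝ, 0 < h → ∀ v : V,
      lam₁ * min 1 h * ‖v‖ ^ 2 ≤ a v v + h * ⟪γ₁ v, γ₁ v⟫_ℝ)
    (b : B₁) (q : B₂) (g : H)
    -- the family of Robin solutions u_{g_h}, h > 0
    (u : ℝ → V) (hu₀ : ∀ h : ℝ, 0 < h → 0 ≤ u h)
    (hu : ∀ h : ℝ, 0 < h → ∀ v : V, 0 ≤ v →
      ⟪g, ι (v - u h)⟫_ℝ - ⟪q, γ₂ (v - u h)⟫_ℝ + h * ⟪b, γ₁ (v - u h)⟫_ℝ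
        ≤ a (u h) (v - u h) + h * ⟪γ₁ (u h), γ₁ (v - u h)⟫_ℝ)
    -- the Dirichlet solution u_g over K = {v : v|_{Γ₁} = b, v ≥ 0}
    (uD : V) (huD₀ : 0 ≤ uD) (huDb : γ₁ uD = b)
    (huD : ∀ v : V, 0 ≤ v → γ₁ v = b →
      ⟪g, ι (v - uD)⟫_ℝ - ⟪q, γ₂ (v - uD)⟫_ℝ ≤ a uD (v - uD)) :
    Tendsto u atTop (nhds uD) := by
  set F : V →L[ℝ] ℝ := (innerSL ℝ g).comp ι - (innerSL ℝ q).comp γ₂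
  have hF : ∀ v, F v = ⟪g, ι v⟫_ℝ - ⟪q, γ₂ v⟫_ℝ := fun v => rfl
  have hK : IsClosed {v : V | 0 ≤ v} := by
    have hcone : {v : V | 0 ≤ v} = ι ⁻¹' Set.Ici 0 := by ext v; simp [hι 0 v]
    exact hcone ▸ isClosed_Ici.preimage ι.continuous
  refine tendsto_of_isPenalizedSolution (F := F) (b := b) (fun v => ?_) hsym (fun h hh => ?_) hK
    hlam₁ ⟨huD₀, huDb, fun v hv hvb => by simpa only [hF] using huD v hv hvb⟩
  · simpa [real_inner_self_eq_norm_sq] using hcoer 1 one_pos v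
  · refine ⟨hu₀ h (by linarith), fun v hv => ?_⟩
    have := hu h (by linarith) v hv
    rw [hF, inner_sub_left]
    linarith

/-- Lemma 4.2: for every fixed source `g`, the solutions `u_{g_h}` of the Robin obstacle
problem converge strongly in `V = H¹(Ω)` to the solution `u_g` of the Dirichlet obstacle
problem as `h → +∞`. -/
theorem stmt_15 {V H B₁ B₂ : Type*}
    [NormedAddCommGroup V] [InnerProductSpace ℝ V] [CompleteSpace V] [Lattice V]
    [NormedAddCommGroup H] [Lattice H] [IsOrderedAddMonoid H] [HasSolidNorm H] [InnerProductSpace ℝ H] [CompleteSpace H]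
    [NormedAddCommGroup B₁] [Lattice B₁] [IsOrderedAddMonoid B₁] [HasSolidNorm B₁] [InnerProductSpace ℝ B₁] [CompleteSpace B₁]
    [NormedAddCommGroup B₂] [Lattice B₂] [IsOrderedAddMonoid B₂] [HasSolidNorm B₂] [InnerProductSpace ℝ B₂] [CompleteSpace B₂]
    (ι : V →L[ℝ] H) (hι : ∀ u v : V, u ≤ v ↔ ι u ≤ ι v)
    (γ₁ : V →L[ℝ] B₁) (γ₂ : V →L[ℝ] B₂)
    (a : V →L[ℝ] V →L[ℝ] ℝ) (hsym : ∀ u v : V, a u v = a v u)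
    (lam₁ : ℝ) (hlam₁ : 0 < lam₁)
    (hcoer : ∀ h : ℝ, 0 < h → ∀ v : V,
      lam₁ * min 1 h * ‖v‖ ^ 2 ≤ a v v + h * ⟪γ₁ v, γ₁ v⟫_ℝ)
    (b : B₁) (q : B₂) (g : H)
    -- the family of Robin solutions u_{g_h}, h > 0
    (u : ℝ → V) (hu₀ : ∀ h : ℝ, 0 < h → 0 ≤ u h)
    (hu : ∀ h : ℝ, 0 < h → ∀ v : V, 0 ≤ v →
      ⟪g, ι (v - u h)⟫_ℝ - ⟪q, γ₂ (v - u h)⟫_ℝ + h * ⟪b, γ₁ (v - u h)⟫_ℝ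
        ≤ a (u h) (v - u h) + h * ⟪γ₁ (u h), γ₁ (v - u h)⟫_ℝ)
    -- the Dirichlet solution u_g over K = {v : v|_{Γ₁} = b, v ≥ 0}
    (uD : V) (huD₀ : 0 ≤ uD) (huDb : γ₁ uD = b)
    (huD : ∀ v : V, 0 ≤ v → γ₁ v = b →
      ⟪g, ι (v - uD)⟫_ℝ - ⟪q, γ₂ (v - uD)⟫_ℝ ≤ a uD (v - uD)) :
    Tendsto u atTop (nhds uD) :=
  stmt_15_general ι hι γ₁ γ₂ a hsym lam₁ hlam₁ hcoer b q g u hu₀ hu uD huD₀ huDb huD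
end

section
/- Let $V$ be a real Hilbert space, $K \subseteq V$ nonempty closed convex, $a$ a continuous symmetric bilinear form coercive with constant $m > 0$, and for sources $g_1, g_2 \in V'$ let $u_1, u_2 \in K$ be the corresponding solutions of the variational inequality. If additionally $\alpha = a(u_1, u_2 - u_1) - \langle g_1, u_2 - u_1 \rangle = 0$ and $\beta = a(u_2, u_1 - u_2) - \langle g_2, u_1 - u_2 \rangle = 0$, then the map $\mu \mapsto u_{\mu g_1 + (1-\mu)g_2}$ is affine on $[0,1]$, i.e. $u_{\mu g_1 + (1-\mu)g_2} = \mu u_1 + (1-\mu) u_2$ for all $\mu \in [0,1]$, and consequently for the functional $J(g) = \tfrac12\|u_g\|^2 + \tfrac{M}{2}\|g\|^2$ (norms in a Hilbert space $H \supseteq V$, $M>0$) one has $\mu J(g_1) + (1-\mu)J(g_2) - J(\mu g_1 + (1-\mu)g_2) = \tfrac{\mu(1-\mu)}{2}\left(\|u_1 - u_2\|_H^2 + M\|g_1 - g_2\|_H^2\right)$ for all $\mu \in [0,1]$. -/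
open scoped InnerProductSpace

set_option maxHeartbeats 1000000

lemma comb_norm_sq {E : Type*} [NormedAddCommGroup E] [InnerProductSpace ℝ E]
    (μ : ℝ) (x y : E) :
    ‖μ • x + (1 - μ) • y‖ ^ 2
      = μ * ‖x‖ ^ 2 + (1 - μ) * ‖y‖ ^ 2 - μ * (1 - μ) * ‖x - y‖ ^ 2 := by
  simp only [← real_inner_self_eq_norm_sq]
  rw [real_inner_add_add_self, real_inner_sub_sub_self]
  simp only [real_inner_smul_left, real_inner_smul_right]
  ring

/-- If `α = β = 0` then the solution map is affine along the segment `[g₁, g₂]`, and the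
cost functional satisfies the exact convexity identity. -/
theorem stmt_18 {V H : Type*}
    [NormedAddCommGroup V] [InnerProductSpace ℝ V] [CompleteSpace V]
    [NormedAddCommGroup H] [InnerProductSpace ℝ H] [CompleteSpace H]
    (ι : V →L[ℝ] H)   -- continuous embedding of V in the Hilbert space H
    (K : Set V) (hKne : K.Nonempty) (hKcl : IsClosed K) (hKco : Convex ℝ K)
    (a : V →L[ℝ] V →L[ℝ] ℝ) (hsym : ∀ u v : V, a u v = a v u)
    (m : ℝ) (hm : 0 < m) (hcoer : ∀ v : V, m * ‖v‖ ^ 2 ≤ a v v)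
    (M : ℝ) (hM : 0 < M)
    (u : H → V)   -- solution map, sources acting through the pairing of H
    (hu : ∀ g : H, u g ∈ K ∧ ∀ v ∈ K, ⟪g, ι (v - u g)⟫_ℝ ≤ a (u g) (v - u g))
    (J : H → ℝ) (hJ : ∀ g : H, J g = 1 / 2 * ‖ι (u g)‖ ^ 2 + M / 2 * ‖g‖ ^ 2)
    (g₁ g₂ : H)
    (hα : a (u g₁) (u g₂ - u g₁) - ⟪g₁, ι (u g₂ - u g₁)⟫_ℝ = 0)
    (hβ : a (u g₂) (u g₁ - u g₂) - ⟪g₂, ι (u g₁ - u g₂)⟫_ℝ = 0) :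
    ∀ μ ∈ Set.Icc (0 : ℝ) 1,
      u (μ • g₁ + (1 - μ) • g₂) = μ • u g₁ + (1 - μ) • u g₂ ∧
      μ * J g₁ + (1 - μ) * J g₂ - J (μ • g₁ + (1 - μ) • g₂)
        = μ * (1 - μ) / 2 * (‖ι (u g₁) - ι (u g₂)‖ ^ 2 + M * ‖g₁ - g₂‖ ^ 2) := by
  intro μ hμ
  obtain ⟨hμ0, hμ1⟩ := hμ
  have hμ1' : (0:ℝ) ≤ 1 - μ := by linarith
  set u₁ := u g₁ with hu₁
  set u₂ := u g₂ with hu₂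
  set w : V := μ • u₁ + (1 - μ) • u₂ with hw
  set gμ : H := μ • g₁ + (1 - μ) • g₂ with hgμ
  have hwK : w ∈ K := hKco (hu g₁).1 (hu g₂).1 hμ0 hμ1' (by ring)
  -- expand α and β
  have hα' : a u₁ u₂ - a u₁ u₁ - (⟪g₁, ι u₂⟫_ℝ - ⟪g₁, ι u₁⟫_ℝ) = 0 := by
    simpa [map_sub, inner_sub_right] using hα
  have hβ' : a u₂ u₁ - a u₂ u₂ - (⟪g₂, ι u₁⟫_ℝ - ⟪g₂, ι u₂⟫_ℝ) = 0 := by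
    simpa [map_sub, inner_sub_right] using hβ
  -- w solves the VI for gμ
  have hVIw : ∀ v ∈ K, ⟪gμ, ι (v - w)⟫_ℝ ≤ a w (v - w) := by
    intro v hv
    have h1 := (hu g₁).2 v hv
    have h2 := (hu g₂).2 v hv
    simp only [← hu₁, ← hu₂, map_sub, inner_sub_right] at h1 h2
    have h1' := mul_le_mul_of_nonneg_left h1 hμ0
    have h2' := mul_le_mul_of_nonneg_left h2 hμ1'
    have hα2 : μ * (1 - μ) * (a u₁ u₂ - a u₁ u₁ - (⟪g₁, ι u₂⟫_ℝ - ⟪g₁, ι u₁⟫_ℝ)) = 0 := by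
      rw [hα']; ring
    have hβ2 : μ * (1 - μ) * (a u₂ u₁ - a u₂ u₂ - (⟪g₂, ι u₁⟫_ℝ - ⟪g₂, ι u₂⟫_ℝ)) = 0 := by
      rw [hβ']; ring
    simp only [hw, hgμ, map_sub, map_add, map_smul, inner_sub_right, inner_add_right,
      inner_smul_right, inner_add_left, inner_smul_left, ContinuousLinearMap.add_apply,
      ContinuousLinearMap.smul_apply, smul_eq_mul, RCLike.inner_apply, starRingEnd_apply,
      star_trivial]
    nlinarith [h1', h2', hα2, hβ2]
  -- uniqueness of the VI solution gives u gμ = w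
  have huw : u gμ = w := by
    set z := u gμ with hz
    have h1 := (hu gμ).2 w hwK
    have h2 := hVIw z (hu gμ).1
    rw [← hz] at h1
    have hsum : 0 ≤ a z (w - z) + a w (z - w) := by
      have : ⟪gμ, ι (w - z)⟫_ℝ + ⟪gμ, ι (z - w)⟫_ℝ = 0 := by
        simp [map_sub, inner_sub_right]
      linarith
    have hneg : a z (w - z) + a w (z - w) = -(a (z - w) (z - w)) := by
      simp only [map_sub, ContinuousLinearMap.sub_apply]
      have := hsym z w
      linarith [hsym z w]
    have hle : a (z - w) (z - w) ≤ 0 := by linarith [hsum, hneg.symm ▸ hsum]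
    have hnorm : m * ‖z - w‖ ^ 2 ≤ 0 := le_trans (hcoer (z - w)) hle
    have : ‖z - w‖ ^ 2 ≤ 0 := by
      nlinarith [sq_nonneg ‖z - w‖]
    have : z - w = 0 := by
      have h0 : ‖z - w‖ = 0 := by nlinarith [norm_nonneg (z - w)]
      simpa using h0
    exact sub_eq_zero.mp this
  refine ⟨huw, ?_⟩
  -- cost identity
  have hιw : ι (u gμ) = μ • ι u₁ + (1 - μ) • ι u₂ := by
    rw [huw, hw]; simp only [map_add, map_smul]
  have e1 : ‖ι (u gμ)‖ ^ 2
      = μ * ‖ι u₁‖ ^ 2 + (1 - μ) * ‖ι u₂‖ ^ 2 - μ * (1 - μ) * ‖ι u₁ - ι u₂‖ ^ 2 := by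
    rw [hιw]; exact comb_norm_sq μ _ _
  have e2 : ‖gμ‖ ^ 2 = μ * ‖g₁‖ ^ 2 + (1 - μ) * ‖g₂‖ ^ 2 - μ * (1 - μ) * ‖g₁ - g₂‖ ^ 2 :=
    comb_norm_sq μ _ _
  rw [hJ, hJ, hJ, e1, e2]
  ring
end
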